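/- With μ̃(θ) = cos(θ)·μ + sin(θ)·ν where ν is V⁻¹-orthogonal to μ (i.e., μᵀΣ⁻¹ν = 0) and ‖ν‖_{Σ⁻¹} = ‖μ‖_{Σ⁻¹}, the portfolio ω*(θ) = (1/(2λ))Σ⁻¹μ̃(θ) satisfies: (i) the realized return μᵀω*(θ) = cos(θ)·μᵀω*(0); (ii) the portfolio volatility sqrt(ω*(θ)ᵀΣω*(θ)) is independent of θ; hence (iii) Sharpe(ω*(θ)) = cos(θ)·Sharpe(ω*(0)). -/
import Mathlib


open Matrix

/-- For the rotated surrogate `μ̃(θ) = cos θ·μ + sin θ·ν`, with `ν` `Σ⁻¹`-orthogonal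
to `μ` of equal `Σ⁻¹`-norm, and `ω*(θ) = (1/(2λ))Σ⁻¹μ̃(θ)`:
(i) realized return scales by `cos θ`; (ii) volatility is independent of `θ`;
(iii) the Sharpe ratio satisfies `Sharpe(ω*(θ)) = cos θ · Sharpe(ω*(0))`. -/
theorem stmt_7 {n : ℕ} (S : Matrix (Fin n) (Fin n) ℝ) (hS : S.PosDef)
    (l : ℝ) (hl : 0 < l) (μ ν : Fin n → ℝ) (hμ : μ ≠ 0) (hν : ν ≠ 0)
    (horth : μ ⬝ᵥ S⁻¹ *ᵥ ν = 0)
    (hnorm : μ ⬝ᵥ S⁻¹ *ᵥ μ = ν ⬝ᵥ S⁻¹ *ᵥ ν)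
    (μt : ℝ → (Fin n → ℝ)) (hμt : μt = fun θ => Real.cos θ • μ + Real.sin θ • ν)
    (ω : ℝ → (Fin n → ℝ)) (hω : ω = fun θ => (1 / (2 * l)) • (S⁻¹ *ᵥ μt θ))
    (θ : ℝ) :
    μ ⬝ᵥ ω θ = Real.cos θ * (μ ⬝ᵥ ω 0) ∧
    Real.sqrt (ω θ ⬝ᵥ S *ᵥ ω θ) = Real.sqrt (ω 0 ⬝ᵥ S *ᵥ ω 0) ∧
    (μ ⬝ᵥ ω θ) / Real.sqrt (ω θ ⬝ᵥ S *ᵥ ω θ) =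
      Real.cos θ * ((μ ⬝ᵥ ω 0) / Real.sqrt (ω 0 ⬝ᵥ S *ᵥ ω 0)) := by
  subst hμt hω
  have hdet : IsUnit S.det := isUnit_iff_ne_zero.mpr hS.det_pos.ne'
  have hA : S⁻¹ᵀ = S⁻¹ := by
    have h := hS.isHermitian.inv.eq
    simpa using h
  have hsym : ∀ x y : Fin n → ℝ, x ⬝ᵥ S⁻¹ *ᵥ y = y ⬝ᵥ S⁻¹ *ᵥ x := by
    intro x y
    rw [dotProduct_mulVec, ← mulVec_transpose, hA, dotProduct_comm]
  have horth' : ν ⬝ᵥ S⁻¹ *ᵥ μ = 0 := by rw [hsym]; exact horth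
  have hSA : ∀ x : Fin n → ℝ, S *ᵥ (S⁻¹ *ᵥ x) = x := by
    intro x
    rw [mulVec_mulVec, Matrix.mul_nonsing_inv S hdet, one_mulVec]
  set c := (1:ℝ)/(2*l) with hc
  have ret : ∀ t : ℝ, μ ⬝ᵥ (c • (S⁻¹ *ᵥ (Real.cos t • μ + Real.sin t • ν)))
      = Real.cos t * (c * (μ ⬝ᵥ S⁻¹ *ᵥ μ)) := by
    intro t
    simp [mulVec_add, mulVec_smul, dotProduct_add, dotProduct_smul, horth, smul_eq_mul]
    ring
  have vol : ∀ t : ℝ, (c • (S⁻¹ *ᵥ (Real.cos t • μ + Real.sin t • ν))) ⬝ᵥ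
      S *ᵥ (c • (S⁻¹ *ᵥ (Real.cos t • μ + Real.sin t • ν)))
      = c^2 * (μ ⬝ᵥ S⁻¹ *ᵥ μ) := by
    intro t
    rw [mulVec_smul, hSA, smul_dotProduct, dotProduct_smul, smul_eq_mul, smul_eq_mul,
      dotProduct_comm]
    have expand : (Real.cos t • μ + Real.sin t • ν) ⬝ᵥ S⁻¹ *ᵥ (Real.cos t • μ + Real.sin t • ν)
        = μ ⬝ᵥ S⁻¹ *ᵥ μ := by
      simp [mulVec_add, mulVec_smul, dotProduct_add, dotProduct_smul, add_dotProduct,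
        smul_dotProduct, horth, horth', smul_eq_mul]
      rw [← hnorm]
      linear_combination (μ ⬝ᵥ S⁻¹ *ᵥ μ) * Real.cos_sq_add_sin_sq t
    rw [expand]; ring
  have h1 : μ ⬝ᵥ (fun θ => c • (S⁻¹ *ᵥ (Real.cos θ • μ + Real.sin θ • ν))) θ
      = Real.cos θ * (μ ⬝ᵥ (fun θ => c • (S⁻¹ *ᵥ (Real.cos θ • μ + Real.sin θ • ν))) 0) := by
    simp only [ret]
    simp
  refine ⟨?_, ?_, ?_⟩
  · simpa using h1
  · simp only [vol]
  · simp only [vol]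
    rw [show μ ⬝ᵥ c • (S⁻¹ *ᵥ (Real.cos θ • μ + Real.sin θ • ν))
      = Real.cos θ * (μ ⬝ᵥ c • (S⁻¹ *ᵥ (Real.cos 0 • μ + Real.sin 0 • ν))) from by simpa using h1]
    ring
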